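/- arXiv:2403.09956 — 2 statements merged into one kernel-verified Lean document; each statement's English description precedes it below -/
import Mathlib

section
/- Let J ≥ 2 and let α ∈ S^{J-1}. For each K ∈ ℕ let Z_K be a random vector in ℝ^J with α + Z_K ∈ S^{J-1} almost surely, let U_1, …, U_K be i.i.d. Uniform(0,1) random variables independent of Z_K, and define T_{Kj} = Σ_{k=1}^K 1(U_k ∈ P_j(α + Z_K)). Let (α_K) be positive reals with α_K/K → 0 as K → ∞, and suppose √(α_K)·Z_K converges in distribution to some probability measure D on ℝ^J. Then (√(α_K)/K)(T_K − Kα) converges in distribution to D. -/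
open MeasureTheory ProbabilityTheory Filter Topology

noncomputable section

/-- The `j`-th interval `P_j(h)` of the partition of `[0,1]` induced by `h ∈ S^{J-1}`:
`P_1(h) = [0, h_1]` and `P_j(h) = (h_1 + ⋯ + h_{j-1}, h_1 + ⋯ + h_j]` for `j ≥ 2`. -/
def Pint {J : ℕ} (h : Fin J → ℝ) (j : Fin J) : Set ℝ :=
  if j.val = 0 then Set.Icc 0 (∑ ℓ ∈ Finset.Iic j, h ℓ)
  else Set.Ioc (∑ ℓ ∈ Finset.Iio j, h ℓ) (∑ ℓ ∈ Finset.Iic j, h ℓ)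

open Classical in
/-- The conditionally multinomial count vector `T_K`:
`T_{Kj} = ∑_{k=1}^K 1(U_k ∈ P_j(Π))`. -/
def countVec {Ω : Type*} {J : ℕ} (K : ℕ) (U : ℕ → Ω → ℝ) (Pi : Ω → Fin J → ℝ)
    (ω : Ω) (j : Fin J) : ℝ :=
  ∑ k ∈ Finset.range K, if U k ω ∈ Pint (Pi ω) j then 1 else 0

/-- Convergence in distribution (weak convergence of the laws): the expectations of every
bounded continuous function converge. -/
def TendstoInDistr {Ω E : Type*} [MeasurableSpace Ω] [MeasurableSpace E] [TopologicalSpace E]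
    (Pr : Measure Ω) (X : ℕ → Ω → E) (D : Measure E) : Prop :=
  ∀ f : BoundedContinuousFunction E ℝ,
    Tendsto (fun K => ∫ ω, f (X K ω) ∂Pr) atTop (𝓝 (∫ x, f x ∂D))

/-- `D` is the centered multivariate normal distribution `N(0, S)`: every linear functional
`x ↦ tᵀx` pushes `D` forward to the real Gaussian with mean `0` and variance `tᵀSt`. -/
def IsCenteredGaussian {ι : Type*} [Fintype ι] (D : Measure (ι → ℝ)) (S : Matrix ι ι ℝ) : Prop :=
  IsProbabilityMeasure D ∧
    ∀ t : ι → ℝ, D.map (fun x => ∑ i, t i * x i) =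
      gaussianReal 0 (Real.toNNReal (∑ i, ∑ i', t i * S i i' * t i'))

/-!
Write `Π_K = α + Z_K`. The two rescaled vectors differ by `(√α_K / K)(T_K − K Π_K)`, and
`T_{Kj} − K Π_{Kj}` is the sum over `k < K` of the centered indicators
`1(U_k ∈ P_j(Π_K)) − Π_{Kj}`, which are bounded by `1`. They are pairwise orthogonal in `L²`:
given `Π_K`, the independent uniforms `U_k`, `U_l` can be integrated out separately (Fubini), and
each centered indicator integrates to `0` because `P_j(Π_K)` has length `Π_{Kj}`. Hence the
difference has second moment at most `α_K / K → 0`, so it tends to `0` in probability, and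
Slutsky's theorem transfers the limit `D` of `√α_K Z_K`.
-/

section Partition

variable {J : ℕ}

lemma measurableSet_setOf_mem_Pint (j : Fin J) :
    MeasurableSet {p : ℝ × (Fin J → ℝ) | p.1 ∈ Pint p.2 j} := by
  have hsum : ∀ s : Finset (Fin J), Measurable fun p : ℝ × (Fin J → ℝ) => ∑ ℓ ∈ s, p.2 ℓ :=
    fun s => Finset.measurable_sum s fun ℓ _ => (measurable_pi_apply ℓ).comp measurable_snd
  unfold Pint
  split_ifs
  · exact (measurableSet_le measurable_const measurable_fst).inter
      (measurableSet_le measurable_fst (hsum _))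
  · exact (measurableSet_lt (hsum _) measurable_fst).inter
      (measurableSet_le measurable_fst (hsum _))

lemma measurableSet_Pint (h : Fin J → ℝ) (j : Fin J) : MeasurableSet (Pint h j) :=
  measurable_prodMk_right (measurableSet_setOf_mem_Pint j)

lemma volume_Pint (h : Fin J → ℝ) (j : Fin J) : volume (Pint h j) = ENNReal.ofReal (h j) := by
  unfold Pint
  split_ifs with hj
  · have hIio : Finset.Iio j = ∅ := Finset.Iio_eq_empty.mpr fun i _ => Fin.le_def.mpr (by omega)
    rw [Real.volume_Icc, ← Finset.sum_Iio_add_eq_sum_Iic, hIio, Finset.sum_empty, zero_add,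
      sub_zero]
  · rw [Real.volume_Ioc, ← Finset.sum_Iio_add_eq_sum_Iic, add_sub_cancel_left]

lemma Pint_subset_Icc {h : Fin J → ℝ} (hh : h ∈ stdSimplex ℝ (Fin J)) (j : Fin J) :
    Pint h j ⊆ Set.Icc 0 1 := by
  have hlo : 0 ≤ ∑ ℓ ∈ Finset.Iio j, h ℓ := Finset.sum_nonneg fun ℓ _ => hh.1 ℓ
  have hhi : ∑ ℓ ∈ Finset.Iic j, h ℓ ≤ 1 :=
    hh.2 ▸ Finset.sum_le_sum_of_subset_of_nonneg (Finset.subset_univ _) fun ℓ _ _ => hh.1 ℓ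
  unfold Pint
  split_ifs
  · exact Set.Icc_subset_Icc le_rfl hhi
  · exact Set.Ioc_subset_Icc_self.trans (Set.Icc_subset_Icc hlo hhi)

instance : IsProbabilityMeasure (volume.restrict (Set.Icc (0 : ℝ) 1)) :=
  ⟨by simp⟩

lemma measureReal_uniform_Pint {h : Fin J → ℝ} (hh : h ∈ stdSimplex ℝ (Fin J)) (j : Fin J) :
    (volume.restrict (Set.Icc (0 : ℝ) 1)).real (Pint h j) = h j := by
  rw [measureReal_def, Measure.restrict_apply (measurableSet_Pint h j),
    Set.inter_eq_left.mpr (Pint_subset_Icc hh j), volume_Pint, ENNReal.toReal_ofReal (hh.1 j)]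

end Partition

section CenteredIndicator

variable {J : ℕ}

def centeredPintIndicator (j : Fin J) (p : ℝ × (Fin J → ℝ)) : ℝ :=
  (Pint p.2 j).indicator 1 p.1 - p.2 j

lemma measurable_centeredPintIndicator (j : Fin J) :
    Measurable (centeredPintIndicator j) :=
  (measurable_const.indicator (measurableSet_setOf_mem_Pint j)).sub
    ((measurable_pi_apply j).comp measurable_snd)

lemma abs_centeredPintIndicator_le {h : Fin J → ℝ} (hh : h ∈ stdSimplex ℝ (Fin J))
    (j : Fin J) (u : ℝ) : |centeredPintIndicator j (u, h)| ≤ 1 := by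
  have h0 := hh.1 j
  have h1 : h j ≤ 1 := hh.2 ▸ Finset.single_le_sum (fun i _ => hh.1 i) (Finset.mem_univ j)
  unfold centeredPintIndicator
  by_cases hu : u ∈ Pint h j
  · rw [Set.indicator_of_mem hu, Pi.one_apply, abs_le]; constructor <;> linarith
  · rw [Set.indicator_of_notMem hu, abs_le]; constructor <;> linarith

lemma integral_centeredPintIndicator {h : Fin J → ℝ} (hh : h ∈ stdSimplex ℝ (Fin J))
    (j : Fin J) : ∫ u, centeredPintIndicator j (u, h) ∂volume.restrict (Set.Icc (0 : ℝ) 1) = 0 := by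
  unfold centeredPintIndicator
  rw [integral_sub ((integrable_const 1).indicator (measurableSet_Pint h j)) (integrable_const _),
    integral_indicator_one (measurableSet_Pint h j), measureReal_uniform_Pint hh,
    integral_const, probReal_univ, one_smul, sub_self]

open Classical in
lemma countVec_sub_eq_sum {Ω : Type*} (K : ℕ) (U : ℕ → Ω → ℝ) (P : Ω → Fin J → ℝ)
    (ω : Ω) (j : Fin J) :
    countVec K U P ω j - K * P ω j =
      ∑ k ∈ Finset.range K, centeredPintIndicator j (U k ω, P ω) := by
  simp only [countVec, centeredPintIndicator, Set.indicator_apply, Pi.one_apply,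
    Finset.sum_sub_distrib, Finset.sum_const, Finset.card_range, nsmul_eq_mul]

end CenteredIndicator

section Orthogonality

variable {Ω : Type*} [MeasurableSpace Ω] {Pr : Measure Ω}

lemma integral_sq_sum_of_orthogonal {ι : Type*} (s : Finset ι) {G : ι → Ω → ℝ}
    (hG : ∀ k ∈ s, MemLp (G k) 2 Pr)
    (horth : ∀ k ∈ s, ∀ l ∈ s, k ≠ l → ∫ ω, G k ω * G l ω ∂Pr = 0) :
    ∫ ω, (∑ k ∈ s, G k ω) ^ 2 ∂Pr = ∑ k ∈ s, ∫ ω, G k ω ^ 2 ∂Pr := by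
  have hint : ∀ k ∈ s, ∀ l ∈ s, Integrable (fun ω => G k ω * G l ω) Pr :=
    fun k hk l hl => (hG k hk).integrable_mul (hG l hl)
  simp_rw [sq, Finset.sum_mul_sum]
  rw [integral_finsetSum _ fun k hk => integrable_finsetSum _ fun l hl => hint k hk l hl]
  refine Finset.sum_congr rfl fun k hk => ?_
  rw [integral_finsetSum _ fun l hl => hint k hk l hl]
  exact Finset.sum_eq_single_of_mem k hk fun l hl hlk => horth k hk l hl (Ne.symm hlk)

variable [IsProbabilityMeasure Pr]

lemma integral_mul_comp_eq_zero_of_indepFun {β γ : Type*} [MeasurableSpace β]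
    [MeasurableSpace γ] {μ : Measure β} [IsProbabilityMeasure μ] {F : β × γ → ℝ}
    (hF : Measurable F) {S : Set γ} (hS : MeasurableSet S) {C : ℝ}
    (hFC : ∀ y ∈ S, ∀ u, |F (u, y)| ≤ C) (hmean : ∀ y ∈ S, ∫ u, F (u, y) ∂μ = 0)
    {V₁ V₂ : Ω → β} {Y : Ω → γ} (hV₁ : Measurable V₁) (hV₂ : Measurable V₂)
    (hY : Measurable Y) (hYS : ∀ᵐ ω ∂Pr, Y ω ∈ S)
    (hlaw₁ : Pr.map V₁ = μ) (hlaw₂ : Pr.map V₂ = μ) (h₁₂ : IndepFun V₁ V₂ Pr)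
    (hVY : IndepFun (fun ω => (V₁ ω, V₂ ω)) Y Pr) :
    ∫ ω, F (V₁ ω, Y ω) * F (V₂ ω, Y ω) ∂Pr = 0 := by
  set ν := Pr.map Y
  have hlaw : Pr.map (fun ω => (Y ω, (V₁ ω, V₂ ω))) = ν.prod (μ.prod μ) := by
    rw [(indepFun_iff_map_prod_eq_prod_map_map hY.aemeasurable
        (hV₁.prodMk hV₂).aemeasurable).mp hVY.symm,
      (indepFun_iff_map_prod_eq_prod_map_map hV₁.aemeasurable hV₂.aemeasurable).mp h₁₂,
      hlaw₁, hlaw₂]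
  set Φ : γ × (β × β) → ℝ := fun q => F (q.2.1, q.1) * F (q.2.2, q.1)
  have hΦ : Measurable Φ :=
    (hF.comp (measurable_snd.fst.prodMk measurable_fst)).mul
      (hF.comp (measurable_snd.snd.prodMk measurable_fst))
  have hνS : ∀ᵐ y ∂ν, y ∈ S := (ae_map_iff hY.aemeasurable hS).mpr hYS
  have hΦint : Integrable Φ (ν.prod (μ.prod μ)) := by
    refine Integrable.of_bound hΦ.aestronglyMeasurable (C * C) ?_
    filter_upwards [Measure.quasiMeasurePreserving_fst.ae hνS] with q hq
    rw [Real.norm_eq_abs, abs_mul]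
    exact mul_le_mul (hFC _ hq _) (hFC _ hq _) (abs_nonneg _)
      ((abs_nonneg _).trans (hFC _ hq q.2.1))
  calc ∫ ω, Φ (Y ω, (V₁ ω, V₂ ω)) ∂Pr
      = ∫ q, Φ q ∂(ν.prod (μ.prod μ)) := by
        rw [← hlaw, integral_map (hY.prodMk (hV₁.prodMk hV₂)).aemeasurable
          hΦ.aestronglyMeasurable]
    _ = ∫ y, ∫ uv, Φ (y, uv) ∂(μ.prod μ) ∂ν := integral_prod Φ hΦint
    _ = 0 := by
        refine integral_eq_zero_of_ae ?_
        filter_upwards [hνS] with y hy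
        rw [integral_prod_mul (fun u => F (u, y)) (fun v => F (v, y)), hmean y hy, zero_mul]
        rfl

end Orthogonality

section CountVector

variable {Ω : Type*} [MeasurableSpace Ω] {Pr : Measure Ω} [IsProbabilityMeasure Pr] {J : ℕ}
  {P : Ω → Fin J → ℝ} {U : ℕ → Ω → ℝ}

lemma measurable_countVec (K : ℕ) (hU : ∀ k, Measurable (U k)) (hP : Measurable P) :
    Measurable (countVec K U P) := by
  refine measurable_pi_lambda _ fun j => Finset.measurable_sum _ fun k _ => ?_
  exact Measurable.ite ((measurableSet_setOf_mem_Pint j).preimage ((hU k).prodMk hP))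
    measurable_const measurable_const

lemma memLp_centeredPintIndicator_comp (hP : Measurable P)
    (hPS : ∀ᵐ ω ∂Pr, P ω ∈ stdSimplex ℝ (Fin J)) {V : Ω → ℝ} (hV : Measurable V) (j : Fin J) :
    MemLp (fun ω => centeredPintIndicator j (V ω, P ω)) 2 Pr := by
  refine MemLp.of_bound ((measurable_centeredPintIndicator j).comp
    (hV.prodMk hP)).aestronglyMeasurable 1 ?_
  filter_upwards [hPS] with ω hω using abs_centeredPintIndicator_le hω j (V ω)

lemma memLp_countVec_sub (hP : Measurable P) (hPS : ∀ᵐ ω ∂Pr, P ω ∈ stdSimplex ℝ (Fin J))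
    (hU : ∀ k, Measurable (U k)) (K : ℕ) (j : Fin J) :
    MemLp (fun ω => countVec K U P ω j - K * P ω j) 2 Pr := by
  simp_rw [countVec_sub_eq_sum]
  exact memLp_finsetSum _ fun k _ => memLp_centeredPintIndicator_comp hP hPS (hU k) j

lemma integral_sq_countVec_sub_le (hP : Measurable P)
    (hPS : ∀ᵐ ω ∂Pr, P ω ∈ stdSimplex ℝ (Fin J)) (hU : ∀ k, Measurable (U k))
    (hUunif : ∀ k, Pr.map (U k) = volume.restrict (Set.Icc (0 : ℝ) 1))
    (hUiid : iIndepFun U Pr) (hUP : IndepFun (fun ω k => U k ω) P Pr) (K : ℕ) (j : Fin J) :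
    ∫ ω, (countVec K U P ω j - K * P ω j) ^ 2 ∂Pr ≤ K := by
  have hG := fun k => memLp_centeredPintIndicator_comp hP hPS (hU k) j
  have horth : ∀ k l, k ≠ l →
      ∫ ω, centeredPintIndicator j (U k ω, P ω) * centeredPintIndicator j (U l ω, P ω) ∂Pr = 0 :=
    fun k l hkl => integral_mul_comp_eq_zero_of_indepFun (measurable_centeredPintIndicator j)
      (isClosed_stdSimplex ℝ (Fin J)).measurableSet (fun _ hy => abs_centeredPintIndicator_le hy j)
      (fun _ hy => integral_centeredPintIndicator hy j) (hU k) (hU l) hP hPS (hUunif k)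
      (hUunif l) (hUiid.indepFun hkl)
      (hUP.comp ((measurable_pi_apply k).prodMk (measurable_pi_apply l)) measurable_id)
  have hsq_le : ∀ k, ∫ ω, centeredPintIndicator j (U k ω, P ω) ^ 2 ∂Pr ≤ 1 := fun k => by
    refine (integral_mono_ae (hG k).integrable_sq (integrable_const 1) ?_).trans (by simp)
    filter_upwards [hPS] with ω hω
    exact (sq_le_one_iff_abs_le_one _).mpr (abs_centeredPintIndicator_le hω j _)
  simp_rw [countVec_sub_eq_sum]
  rw [integral_sq_sum_of_orthogonal _ (fun k _ => hG k) fun k _ l _ => horth k l]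
  simpa using Finset.sum_le_sum fun k (_ : k ∈ Finset.range K) => hsq_le k

end CountVector

section Convergence

variable {Ω : Type*} [MeasurableSpace Ω] {Pr : Measure Ω} [IsProbabilityMeasure Pr]

lemma tendstoInDistr_iff_tendstoInDistribution {E : Type*} [TopologicalSpace E]
    [MeasurableSpace E] [OpensMeasurableSpace E] {X : ℕ → Ω → E}
    (hX : ∀ K, AEMeasurable (X K) Pr) {D : Measure E} [IsProbabilityMeasure D] :
    TendstoInDistr Pr X D ↔ TendstoInDistribution X atTop id (fun _ => Pr) D := by
  have hlaw : ∀ K (f : BoundedContinuousFunction E ℝ),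
      ∫ x, f x ∂(Pr.map (X K)) = ∫ ω, f (X K ω) ∂Pr :=
    fun K f => integral_map (hX K) f.continuous.aestronglyMeasurable
  refine ⟨fun h => ⟨hX, aemeasurable_id, ?_⟩, fun h f => ?_⟩
  · refine ProbabilityMeasure.tendsto_iff_forall_integral_tendsto.mpr fun f => ?_
    simpa [hlaw] using h f
  · simpa [hlaw] using ProbabilityMeasure.tendsto_iff_forall_integral_tendsto.mp h.tendsto f

lemma sq_norm_le_sum_sq {ι : Type*} [Fintype ι] (v : ι → ℝ) : ‖v‖ ^ 2 ≤ ∑ i, v i ^ 2 := by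
  have hsum : 0 ≤ ∑ i, v i ^ 2 := Finset.sum_nonneg fun i _ => sq_nonneg (v i)
  refine (Real.le_sqrt (norm_nonneg v) hsum).mp ((pi_norm_le_iff_of_nonneg (Real.sqrt_nonneg _)).mpr
    fun i => ?_)
  exact Real.abs_le_sqrt (Finset.single_le_sum (fun i _ => sq_nonneg (v i)) (Finset.mem_univ i))

lemma tendstoInMeasure_zero_of_integral_sq_le {ι : Type*} [Fintype ι] {Y : ℕ → Ω → ι → ℝ}
    {b : ℕ → ℝ} (hb : Tendsto b atTop (𝓝 0))
    (hY : ∀ᶠ K in atTop, ∀ i, MemLp (fun ω => Y K ω i) 2 Pr ∧ ∫ ω, Y K ω i ^ 2 ∂Pr ≤ b K) :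
    TendstoInMeasure Pr Y atTop 0 := by
  rw [tendstoInMeasure_iff_measureReal_norm]
  intro ε hε
  have hlim : Tendsto (fun K => Fintype.card ι * b K / ε ^ 2) atTop (𝓝 0) := by
    simpa using (hb.const_mul (Fintype.card ι : ℝ)).div_const (ε ^ 2)
  refine tendsto_of_tendsto_of_tendsto_of_le_of_le' tendsto_const_nhds hlim
    (Eventually.of_forall fun K => measureReal_nonneg) ?_
  filter_upwards [hY] with K hK
  have hint : Integrable (fun ω => ∑ i, Y K ω i ^ 2) Pr :=
    integrable_finsetSum _ fun i _ => (hK i).1.integrable_sq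
  have hmarkov := mul_meas_ge_le_integral_of_nonneg
    (Eventually.of_forall fun ω => Finset.sum_nonneg fun i _ => sq_nonneg (Y K ω i)) hint (ε ^ 2)
  calc Pr.real {ω | ε ≤ ‖Y K ω - (0 : Ω → ι → ℝ) ω‖}
      ≤ Pr.real {ω | ε ^ 2 ≤ ∑ i, Y K ω i ^ 2} := by
        refine measureReal_mono fun ω hω => ?_
        simp only [Set.mem_ofPred_eq, Pi.zero_apply, sub_zero] at hω ⊢
        exact (pow_le_pow_left₀ hε.le hω 2).trans (sq_norm_le_sum_sq _)
    _ ≤ (∫ ω, ∑ i, Y K ω i ^ 2 ∂Pr) / ε ^ 2 := by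
        rw [le_div_iff₀ (by positivity), mul_comm]; exact hmarkov
    _ ≤ Fintype.card ι * b K / ε ^ 2 := by
        rw [integral_finsetSum _ fun i _ => (hK i).1.integrable_sq]
        gcongr
        simpa using Finset.sum_le_sum fun i (_ : i ∈ Finset.univ) => (hK i).2

lemma tendstoInMeasure_scaled_countVec_sub {P : ℕ → Ω → Fin J → ℝ} {U : ℕ → ℕ → Ω → ℝ}
    {a : ℕ → ℝ} (hP : ∀ K, Measurable (P K))
    (hPS : ∀ K, ∀ᵐ ω ∂Pr, P K ω ∈ stdSimplex ℝ (Fin J)) (hU : ∀ K k, Measurable (U K k))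
    (hUunif : ∀ K k, Pr.map (U K k) = volume.restrict (Set.Icc (0 : ℝ) 1))
    (hUiid : ∀ K, iIndepFun (U K) Pr) (hUP : ∀ K, IndepFun (fun ω k => U K k ω) (P K) Pr)
    (ha : ∀ K, 0 ≤ a K) (haK : Tendsto (fun K : ℕ => a K / K) atTop (𝓝 0)) :
    TendstoInMeasure Pr
      (fun K ω j => Real.sqrt (a K) / K * (countVec K (U K) (P K) ω j - K * P K ω j)) atTop 0 := by
  refine tendstoInMeasure_zero_of_integral_sq_le haK (Eventually.of_forall fun K j =>
    ⟨(memLp_countVec_sub (hP K) (hPS K) (hU K) K j).const_mul _, ?_⟩)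
  simp_rw [mul_pow, div_pow, Real.sq_sqrt (ha K)]
  rw [integral_const_mul]
  calc a K / K ^ 2 * ∫ ω, (countVec K (U K) (P K) ω j - K * P K ω j) ^ 2 ∂Pr
      ≤ a K / K ^ 2 * K := by
        refine mul_le_mul_of_nonneg_left ?_ (div_nonneg (ha K) (sq_nonneg _))
        exact integral_sq_countVec_sub_le (hP K) (hPS K) (hU K) (hUunif K) (hUiid K) (hUP K) K j
    _ = a K / K := by
        rcases eq_or_ne (K : ℝ) 0 with hK | hK
        · simp [hK]
        · field_simp

end Convergence

theorem compound_multinomial_limit_mixing_dominates_general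
    {Ω : Type*} [MeasurableSpace Ω] (Pr : Measure Ω) [IsProbabilityMeasure Pr]
    (J : ℕ) (α : Fin J → ℝ)
    (Z : ℕ → Ω → Fin J → ℝ) (hZmeas : ∀ K, Measurable (Z K))
    (hZval : ∀ K, ∀ᵐ ω ∂Pr, (fun j => α j + Z K ω j) ∈ stdSimplex ℝ (Fin J))
    (U : ℕ → ℕ → Ω → ℝ) (hUmeas : ∀ K k, Measurable (U K k))
    (hUunif : ∀ K k, Pr.map (U K k) = volume.restrict (Set.Icc (0:ℝ) 1))
    (hUiid : ∀ K, iIndepFun (U K) Pr)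
    (hUZindep : ∀ K, IndepFun (fun ω k => U K k ω) (Z K) Pr)
    (a : ℕ → ℝ) (ha : ∀ K, 0 < a K)
    (haK : Tendsto (fun K : ℕ => a K / K) atTop (𝓝 0))
    (D : Measure (Fin J → ℝ)) [IsProbabilityMeasure D]
    (hZconv : TendstoInDistr Pr (fun K ω j => Real.sqrt (a K) * Z K ω j) D) :
    TendstoInDistr Pr
      (fun K ω j =>
        Real.sqrt (a K) / K *
          (countVec K (U K) (fun ω' j' => α j' + Z K ω' j') ω j - K * α j))
      D := by
  set P : ℕ → Ω → Fin J → ℝ := fun K ω j => α j + Z K ω j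
  have hP : ∀ K, Measurable (P K) := fun K => by fun_prop
  have hUP : ∀ K, IndepFun (fun ω k => U K k ω) (P K) Pr := fun K =>
    (hUZindep K).comp measurable_id
      (show Measurable fun (z : Fin J → ℝ) j => α j + z j by fun_prop)
  have hX : ∀ K, Measurable fun ω j => Real.sqrt (a K) * Z K ω j := fun K => by fun_prop
  have hW : ∀ K, Measurable fun ω j =>
      Real.sqrt (a K) / K * (countVec K (U K) (P K) ω j - K * α j) := fun K =>
    measurable_pi_lambda _ fun j => measurable_const.mul <|
      ((measurable_pi_apply j).comp (measurable_countVec K (hUmeas K) (hP K))).sub measurable_const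
  rw [tendstoInDistr_iff_tendstoInDistribution fun K => (hX K).aemeasurable] at hZconv
  rw [tendstoInDistr_iff_tendstoInDistribution fun K => (hW K).aemeasurable]
  refine tendstoInDistribution_of_tendstoInMeasure_sub _ id hZconv ?_ fun K => (hW K).aemeasurable
  refine (tendstoInMeasure_scaled_countVec_sub hP hZval hUmeas hUunif hUiid hUP
    (fun K => (ha K).le) haK).congr' ?_ EventuallyEq.rfl
  filter_upwards [eventually_ne_atTop 0] with K hK
  refine Eventually.of_forall fun ω => funext fun j => ?_
  simp only [P, Pi.sub_apply]
  field_simp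
  ring

/-- **Theorem 2.** If `√(α_K)·Z_K ⇝ D` and `α_K/K → 0`, then
`(√(α_K)/K)(T_K − Kα) ⇝ D`. -/
theorem compound_multinomial_limit_mixing_dominates
    {Ω : Type*} [MeasurableSpace Ω] (Pr : Measure Ω) [IsProbabilityMeasure Pr]
    (J : ℕ) (hJ : 2 ≤ J) (α : Fin J → ℝ) (hα : α ∈ stdSimplex ℝ (Fin J))
    (Z : ℕ → Ω → Fin J → ℝ) (hZmeas : ∀ K, Measurable (Z K))
    (hZval : ∀ K, ∀ᵐ ω ∂Pr, (fun j => α j + Z K ω j) ∈ stdSimplex ℝ (Fin J))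
    (U : ℕ → ℕ → Ω → ℝ) (hUmeas : ∀ K k, Measurable (U K k))
    (hUunif : ∀ K k, Pr.map (U K k) = volume.restrict (Set.Icc (0:ℝ) 1))
    (hUiid : ∀ K, iIndepFun (U K) Pr)
    (hUZindep : ∀ K, IndepFun (fun ω k => U K k ω) (Z K) Pr)
    (a : ℕ → ℝ) (ha : ∀ K, 0 < a K)
    (haK : Tendsto (fun K : ℕ => a K / K) atTop (𝓝 0))
    (D : Measure (Fin J → ℝ)) [IsProbabilityMeasure D]
    (hZconv : TendstoInDistr Pr (fun K ω j => Real.sqrt (a K) * Z K ω j) D) :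
    TendstoInDistr Pr
      (fun K ω j =>
        Real.sqrt (a K) / K *
          (countVec K (U K) (fun ω' j' => α j' + Z K ω' j') ω j - K * α j))
      D :=
  compound_multinomial_limit_mixing_dominates_general Pr J α Z hZmeas hZval U hUmeas hUunif hUiid
    hUZindep a ha haK D hZconv

end
end

section
/- Let J ≥ 2, let h, h' ∈ S^{J-1}, and let 1 ≤ j ≤ J. Then the Lebesgue measure of the set difference of the j-th partition intervals satisfies λ(P_j(h) \ P_j(h')) ≤ |Σ_{ℓ=1}^{j-1}(h_ℓ − h'_ℓ)| + |Σ_{ℓ=1}^{j}(h_ℓ − h'_ℓ)| ≤ 2·√J·‖h − h'‖, where ‖·‖ is the Euclidean norm on ℝ^J. -/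
open MeasureTheory ProbabilityTheory Filter Topology

noncomputable section

/-- The Lebesgue measure of the set difference of `j`-th partition intervals is bounded by
`|Σ_{ℓ<j}(h_ℓ − h'_ℓ)| + |Σ_{ℓ≤j}(h_ℓ − h'_ℓ)| ≤ 2√J·‖h − h'‖`. -/
theorem measure_partition_sdiff_le
    (J : ℕ) (hJ : 2 ≤ J) (h h' : Fin J → ℝ)
    (hh : h ∈ stdSimplex ℝ (Fin J)) (hh' : h' ∈ stdSimplex ℝ (Fin J)) (j : Fin J) :
    volume (Pint h j \ Pint h' j) ≤
      ENNReal.ofReal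
        (|∑ ℓ ∈ Finset.Iio j, (h ℓ - h' ℓ)| + |∑ ℓ ∈ Finset.Iic j, (h ℓ - h' ℓ)|) ∧
    |∑ ℓ ∈ Finset.Iio j, (h ℓ - h' ℓ)| + |∑ ℓ ∈ Finset.Iic j, (h ℓ - h' ℓ)| ≤
      2 * Real.sqrt J * Real.sqrt (∑ ℓ, (h ℓ - h' ℓ) ^ 2) := by
  set a : ℝ := ∑ ℓ ∈ Finset.Iic j, h ℓ with ha
  set a' : ℝ := ∑ ℓ ∈ Finset.Iic j, h' ℓ with ha'
  set b : ℝ := ∑ ℓ ∈ Finset.Iio j, h ℓ with hb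
  set b' : ℝ := ∑ ℓ ∈ Finset.Iio j, h' ℓ with hb'
  have hbd : (∑ ℓ ∈ Finset.Iio j, (h ℓ - h' ℓ)) = b - b' := by
    rw [Finset.sum_sub_distrib]
  have had : (∑ ℓ ∈ Finset.Iic j, (h ℓ - h' ℓ)) = a - a' := by
    rw [Finset.sum_sub_distrib]
  constructor
  · -- measure bound
    have hsub : Pint h j \ Pint h' j ⊆
        Set.Icc (min b b') (max b b') ∪ Set.Icc (min a a') (max a a') := by
      intro x hx
      obtain ⟨hx1, hx2⟩ := hx
      unfold Pint at hx1 hx2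
      by_cases h0 : j.val = 0
      · simp only [h0, if_true] at hx1 hx2
        right
        have hxa' : a' < x := by
          by_contra hle
          exact hx2 ⟨hx1.1, le_of_not_gt hle⟩
        exact ⟨le_trans (min_le_right _ _) hxa'.le, le_trans hx1.2 (le_max_left _ _)⟩
      · simp only [h0, if_false] at hx1 hx2
        by_cases hxb' : x ≤ b'
        · left
          exact ⟨le_trans (min_le_left _ _) hx1.1.le,
            le_trans hxb' (le_max_right _ _)⟩
        · right
          have hxa' : a' < x := by
            by_contra hle
            exact hx2 ⟨lt_of_not_ge hxb', le_of_not_gt hle⟩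
          exact ⟨le_trans (min_le_right _ _) hxa'.le, le_trans hx1.2 (le_max_left _ _)⟩
    calc volume (Pint h j \ Pint h' j)
        ≤ volume (Set.Icc (min b b') (max b b') ∪ Set.Icc (min a a') (max a a')) :=
          measure_mono hsub
      _ ≤ volume (Set.Icc (min b b') (max b b')) + volume (Set.Icc (min a a') (max a a')) :=
          measure_union_le _ _
      _ = ENNReal.ofReal (|b - b'|) + ENNReal.ofReal (|a - a'|) := by
          rw [Real.volume_Icc, Real.volume_Icc, max_sub_min_eq_abs, max_sub_min_eq_abs,
            abs_sub_comm b' b, abs_sub_comm a' a]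
      _ = ENNReal.ofReal (|∑ ℓ ∈ Finset.Iio j, (h ℓ - h' ℓ)| + |∑ ℓ ∈ Finset.Iic j, (h ℓ - h' ℓ)|) := by
          rw [hbd, had, ENNReal.ofReal_add (abs_nonneg _) (abs_nonneg _)]
  · -- Cauchy–Schwarz bound
    have key : ∀ s : Finset (Fin J), |∑ ℓ ∈ s, (h ℓ - h' ℓ)| ≤
        Real.sqrt J * Real.sqrt (∑ ℓ, (h ℓ - h' ℓ) ^ 2) := by
      intro s
      have h1 : |∑ ℓ ∈ s, (h ℓ - h' ℓ)| ≤ ∑ ℓ, |h ℓ - h' ℓ| :=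
        (Finset.abs_sum_le_sum_abs _ _).trans
          (Finset.sum_le_sum_of_subset_of_nonneg (Finset.subset_univ s)
            (fun _ _ _ => abs_nonneg _))
      have h2 : (∑ ℓ, |h ℓ - h' ℓ|) ^ 2 ≤ (J : ℝ) * ∑ ℓ, (h ℓ - h' ℓ) ^ 2 := by
        have := sq_sum_le_card_mul_sum_sq (s := (Finset.univ : Finset (Fin J)))
          (f := fun ℓ => |h ℓ - h' ℓ|)
        simpa [sq_abs] using this
      have h3 : (∑ ℓ, |h ℓ - h' ℓ|) ≤ Real.sqrt ((J : ℝ) * ∑ ℓ, (h ℓ - h' ℓ) ^ 2) := by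
        rw [Real.le_sqrt (Finset.sum_nonneg fun _ _ => abs_nonneg _)]
        · exact h2
        · positivity
      rw [← Real.sqrt_mul (by positivity)]
      exact h1.trans h3
    have := add_le_add (key (Finset.Iio j)) (key (Finset.Iic j))
    linarith

end
end
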